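/- arXiv:2411.16218 — 3 statements merged into one kernel-verified Lean document; each statement's English description precedes it below -/
import Mathlib

section
/- For all sufficiently large t, every colouring φ: E(K^{(2)}_{n,n}) → ℕ of the edges of the complete bipartite graph with both vertex classes of size n = t^{3(t+1)} yields a canonical copy of K^{(2)}_{t,t}; in other words, the canonical Ramsey number satisfies ER(K^{(2)}_{t,t}) ≤ t^{3(t+1)}. -/
/-!
Write the colouring as `ψ x y` and call `y` a heavy row if a single colour occupies many of the
edges `x y`. If half of the rows are heavy, averaging over the `t`-subsets of `X` gives a `t`-set
`S` inside the dominant colour class of `t²` heavy rows; among these rows, `t` either share their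
dominant colour (a monochromatic grid) or have pairwise distinct ones (the colour is a function
of the row, injective on the grid). Heavy columns are handled in the same way with the roles of
the sides exchanged. Otherwise most rows and most columns are light: choose greedily `t` rows
whose colourings agree on few columns in total, then `t` columns avoiding these agreements and
every colour already used, which gives a rainbow grid.
-/

namespace CanonicalRamsey

open Finset

variable {α β γ : Type*}

/-- `p` and `q` record whether the coordinates `0` and `1` belong to the set `J` of the
canonical colouring. -/
def IsCanonicalGrid (ψ : α → β → γ) (S : Finset α) (T : Finset β) : Prop :=
  ∃ p q : Prop, ∀ x ∈ S, ∀ x' ∈ S, ∀ y ∈ T, ∀ y' ∈ T,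
    (ψ x y = ψ x' y' ↔ (p → x = x') ∧ (q → y = y'))

section Grid

variable {ψ : α → β → γ} {S : Finset α} {T : Finset β}

theorem IsCanonicalGrid.flip (h : IsCanonicalGrid ψ S T) : IsCanonicalGrid (flip ψ) T S := by
  obtain ⟨p, q, h⟩ := h
  exact ⟨q, p, fun y hy y' hy' x hx x' hx' => (h x hx x' hx' y hy y' hy').trans and_comm⟩

theorem isCanonicalGrid_of_eq_const (c : γ) (h : ∀ x ∈ S, ∀ y ∈ T, ψ x y = c) :
    IsCanonicalGrid ψ S T :=
  ⟨False, False, fun x hx x' hx' y hy y' hy' => by simp [h x hx y hy, h x' hx' y' hy']⟩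

theorem isCanonicalGrid_of_eq_injOn (w : β → γ) (hw : Set.InjOn w T)
    (h : ∀ x ∈ S, ∀ y ∈ T, ψ x y = w y) : IsCanonicalGrid ψ S T :=
  ⟨False, True, fun x hx x' hx' y hy y' hy' => by
    simpa [h x hx y hy, h x' hx' y' hy'] using hw.eq_iff hy hy'⟩

theorem isCanonicalGrid_of_injOn (h : Set.InjOn (Function.uncurry ψ) (↑S ×ˢ ↑T)) :
    IsCanonicalGrid ψ S T :=
  ⟨True, True, fun x hx x' hx' y hy y' hy' => by
    simpa [Prod.ext_iff] using h.eq_iff (Set.mk_mem_prod hx hy) (Set.mk_mem_prod hx' hy')⟩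

end Grid

theorem exists_const_or_injOn (w : β → γ) (H : Finset β) (t : ℕ) (hH : t * t ≤ #H) :
    (∃ T ⊆ H, #T = t ∧ ∃ c, ∀ y ∈ T, w y = c) ∨ ∃ T ⊆ H, #T = t ∧ Set.InjOn w T := by
  classical
  by_cases himage : t ≤ #(H.image w)
  · right
    obtain ⟨U, hUH, hUinj, hUimage⟩ :=
      exists_subset_injOn_image_eq_of_surjOn (f := w) (H : Set β) (H.image w)
        (by simp [Set.SurjOn])
    rw [← hUimage, card_image_of_injOn hUinj] at himage
    obtain ⟨T, hTU, hTt⟩ := exists_subset_card_eq himage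
    exact ⟨T, fun y hy => by simpa using hUH (hTU hy), hTt, hUinj.mono (by simpa using hTU)⟩
  · left
    have hfiber : #(H.image w) * (t - 1) < #H := by
      calc #(H.image w) * (t - 1) ≤ (t - 1) * (t - 1) := by gcongr; omega
        _ < t * t := by gcongr <;> omega
        _ ≤ #H := hH
    obtain ⟨c, -, hc⟩ := exists_lt_card_fiber_of_mul_lt_card_of_maps_to
      (fun y hy => mem_image_of_mem w hy) hfiber
    obtain ⟨T, hT, hTt⟩ := exists_subset_card_eq (show t ≤ #{y ∈ H | w y = c} by omega)
    exact ⟨T, hT.trans (filter_subset _ _), hTt, c, fun y hy => (mem_filter.1 (hT hy)).2⟩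

theorem exists_subset_contained_in_many [DecidableEq α] (X : Finset α) (H : Finset β)
    (C : β → Finset α) (t M Q : ℕ) (hC : ∀ y ∈ H, C y ⊆ X ∧ M ≤ #(C y)) (ht : t ≤ #X)
    (hcount : Q * (#X).choose t ≤ #H * M.choose t) :
    ∃ S ⊆ X, #S = t ∧ Q ≤ #{y ∈ H | S ⊆ C y} := by
  set 𝒯 := X.powersetCard t
  have hsum : ∑ _S ∈ 𝒯, Q ≤ ∑ S ∈ 𝒯, #{y ∈ H | S ⊆ C y} :=
    calc ∑ _S ∈ 𝒯, Q = Q * (#X).choose t := by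
          rw [sum_const, card_powersetCard, smul_eq_mul, mul_comm]
      _ ≤ ∑ _y ∈ H, M.choose t := by rwa [sum_const, smul_eq_mul]
      _ ≤ ∑ y ∈ H, #{S ∈ 𝒯 | S ⊆ C y} := by
        gcongr with y hy
        calc M.choose t ≤ (#(C y)).choose t := Nat.choose_le_choose t (hC y hy).2
          _ = #((C y).powersetCard t) := (card_powersetCard t _).symm
          _ ≤ #{S ∈ 𝒯 | S ⊆ C y} := card_le_card fun S hS => by
            rw [mem_powersetCard] at hS
            exact mem_filter.2 ⟨mem_powersetCard.2 ⟨hS.1.trans (hC y hy).1, hS.2⟩, hS.1⟩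
      _ = ∑ S ∈ 𝒯, #{y ∈ H | S ⊆ C y} :=
        (sum_card_bipartiteAbove_eq_sum_card_bipartiteBelow _).symm
  obtain ⟨S, hS, hQ⟩ := exists_le_of_sum_le (powersetCard_nonempty.2 ht) hsum
  exact ⟨S, (mem_powersetCard.1 hS).1, (mem_powersetCard.1 hS).2, hQ⟩

theorem mul_choose_le_mul_choose_of_pow_le {A B n a k : ℕ}
    (h : A * n ^ k ≤ B * (a + 1 - k) ^ k) : A * n.choose k ≤ B * a.choose k := by
  have hdesc : A * n.descFactorial k ≤ B * a.descFactorial k :=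
    calc A * n.descFactorial k ≤ A * n ^ k := by gcongr; exact Nat.descFactorial_le_pow n k
      _ ≤ B * (a + 1 - k) ^ k := h
      _ ≤ B * a.descFactorial k := by gcongr; exact Nat.pow_sub_le_descFactorial a k
  rw [Nat.choose_eq_descFactorial_div_factorial, Nat.choose_eq_descFactorial_div_factorial,
    ← Nat.mul_div_assoc A (Nat.factorial_dvd_descFactorial n k),
    ← Nat.mul_div_assoc B (Nat.factorial_dvd_descFactorial a k)]
  exact Nat.div_le_div_right hdesc

def heavyRows [DecidableEq γ] (ψ : α → β → γ) (X : Finset α) (Y : Finset β) (M : ℕ) :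
    Finset β :=
  {y ∈ Y | ∃ x ∈ X, M ≤ #{x' ∈ X | ψ x' y = ψ x y}}

theorem heavyRows_subset [DecidableEq γ] (ψ : α → β → γ) (X : Finset α) (Y : Finset β)
    (M : ℕ) : heavyRows ψ X Y M ⊆ Y :=
  filter_subset _ _

theorem card_filter_le_of_notMem_heavyRows [DecidableEq γ] {ψ : α → β → γ} {A X : Finset α}
    {Y : Finset β} {M : ℕ} {y : β} (hAX : A ⊆ X) (hyY : y ∈ Y) (hyH : y ∉ heavyRows ψ X Y M)
    (c : γ) : #{x ∈ A | ψ x y = c} ≤ M := by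
  refine (card_le_card (filter_subset_filter _ hAX)).trans ?_
  rcases eq_empty_or_nonempty {x ∈ X | ψ x y = c} with h | ⟨x, hx⟩
  · simp [h]
  · obtain ⟨hxX, rfl⟩ := mem_filter.1 hx
    exact (not_le.1 fun h => hyH (mem_filter.2 ⟨hyY, x, hxX, h⟩)).le

theorem exists_canonicalGrid_of_heavyRows [DecidableEq γ] [Nonempty α] (ψ : α → β → γ)
    (X : Finset α) (Y : Finset β) (t M : ℕ) (ht : t ≤ #X)
    (hcount : t * t * #X ^ t ≤ #(heavyRows ψ X Y M) * (M + 1 - t) ^ t) :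
    ∃ S ⊆ X, ∃ T ⊆ Y, #S = t ∧ #T = t ∧ IsCanonicalGrid ψ S T := by
  classical
  set H := heavyRows ψ X Y M
  choose! xr _ hM using fun y (hy : y ∈ H) => (mem_filter.1 hy).2
  obtain ⟨S, hSX, hSt, hmany⟩ := exists_subset_contained_in_many X H
    (fun y => {x ∈ X | ψ x y = ψ (xr y) y}) t M (t * t)
    (fun y hy => ⟨filter_subset _ _, hM y hy⟩) ht (mul_choose_le_mul_choose_of_pow_le hcount)
  set H' := {y ∈ H | S ⊆ {x ∈ X | ψ x y = ψ (xr y) y}}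
  have hH'Y : H' ⊆ Y := (filter_subset _ _).trans (filter_subset _ _)
  have hval : ∀ x ∈ S, ∀ y ∈ H', ψ x y = ψ (xr y) y :=
    fun x hx y hy => (mem_filter.1 ((mem_filter.1 hy).2 hx)).2
  rcases exists_const_or_injOn (fun y => ψ (xr y) y) H' t hmany with
    ⟨T, hT, hTt, c, hc⟩ | ⟨T, hT, hTt, hinj⟩
  · exact ⟨S, hSX, T, hT.trans hH'Y, hSt, hTt,
      isCanonicalGrid_of_eq_const c fun x hx y hy => (hval x hx y (hT hy)).trans (hc y hy)⟩
  · exact ⟨S, hSX, T, hT.trans hH'Y, hSt, hTt,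
      isCanonicalGrid_of_eq_injOn _ hinj fun x hx y hy => hval x hx y (hT hy)⟩

section Light

variable [DecidableEq γ]

def collisions [DecidableEq β] (ψ : α → β → γ) (A : Finset α) (R : Finset β) : Finset α :=
  {x ∈ A | ∃ y ∈ R, ∃ y' ∈ R, y ≠ y' ∧ ψ x y = ψ x y'}

variable {ψ : α → β → γ}

theorem collisions_subset [DecidableEq β] (A : Finset α) (R : Finset β) :
    collisions ψ A R ⊆ A :=
  filter_subset _ _

theorem injOn_of_notMem_collisions [DecidableEq β] {A : Finset α} {R : Finset β} {x : α}
    (hx : x ∈ A) (hcoll : x ∉ collisions ψ A R) : Set.InjOn (ψ x) R := by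
  intro y hy y' hy' h
  by_contra hne
  exact hcoll (mem_filter.2 ⟨hx, y, hy, y', hy', hne, h⟩)

theorem card_collisions_insert_le [DecidableEq β] (A : Finset α) (R : Finset β) (y : β) :
    #(collisions ψ A (insert y R)) ≤
      #(collisions ψ A R) + ∑ y' ∈ R, #{x ∈ A | ψ x y' = ψ x y} := by
  classical
  calc #(collisions ψ A (insert y R))
      ≤ #(collisions ψ A R ∪ R.biUnion fun y' => {x ∈ A | ψ x y' = ψ x y}) := by
        refine card_le_card fun x hx => ?_
        obtain ⟨hxA, y₁, hy₁, y₂, hy₂, hne, h⟩ := mem_filter.1 hx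
        simp only [mem_union, mem_biUnion, mem_filter, collisions]
        rw [mem_insert] at hy₁ hy₂
        rcases hy₁ with rfl | hy₁ <;> rcases hy₂ with rfl | hy₂
        · exact absurd rfl hne
        · exact Or.inr ⟨y₂, hy₂, hxA, h.symm⟩
        · exact Or.inr ⟨y₁, hy₁, hxA, h⟩
        · exact Or.inl ⟨hxA, y₁, hy₁, y₂, hy₂, hne, h⟩
    _ ≤ #(collisions ψ A R) + ∑ y' ∈ R, #{x ∈ A | ψ x y' = ψ x y} :=
        (card_union_le _ _).trans (by gcongr; exact card_biUnion_le)

theorem exists_mem_sdiff_few_agreements [DecidableEq β] (A : Finset α) {B R : Finset β}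
    (M : ℕ) (hlight : ∀ x ∈ A, ∀ c, #{y ∈ B | ψ x y = c} ≤ M) (hne : (B \ R).Nonempty) :
    ∃ y ∈ B \ R, #(B \ R) * ∑ y' ∈ R, #{x ∈ A | ψ x y' = ψ x y} ≤ #R * (#A * M) := by
  have hagree : ∀ y' ∈ R, ∑ y ∈ B \ R, #{x ∈ A | ψ x y' = ψ x y} ≤ #A * M := fun y' _ =>
    calc ∑ y ∈ B \ R, #{x ∈ A | ψ x y' = ψ x y}
        = ∑ x ∈ A, #{y ∈ B \ R | ψ x y' = ψ x y} :=
          (sum_card_bipartiteAbove_eq_sum_card_bipartiteBelow _).symm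
      _ ≤ ∑ _x ∈ A, M := sum_le_sum fun x hx => (card_le_card fun y hy => by
          simp only [mem_filter, mem_sdiff] at hy ⊢
          exact ⟨hy.1.1, hy.2.symm⟩).trans (hlight x hx _)
      _ = #A * M := by rw [sum_const, smul_eq_mul]
  refine exists_le_of_sum_le hne ?_
  calc ∑ y ∈ B \ R, #(B \ R) * ∑ y' ∈ R, #{x ∈ A | ψ x y' = ψ x y}
      = #(B \ R) * ∑ y' ∈ R, ∑ y ∈ B \ R, #{x ∈ A | ψ x y' = ψ x y} := by
        rw [← mul_sum, sum_comm]
    _ ≤ #(B \ R) * (#R * (#A * M)) := by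
        gcongr
        exact (sum_le_sum hagree).trans (by rw [sum_const, smul_eq_mul])
    _ = ∑ _y ∈ B \ R, #R * (#A * M) := by rw [sum_const, smul_eq_mul]

theorem exists_rows_few_collisions [DecidableEq β] (A : Finset α) (B : Finset β)
    (t M K : ℕ)     (hlight : ∀ x ∈ A, ∀ c, #{y ∈ B | ψ x y = c} ≤ M) (htB : t ≤ #B)
    (hK : #A * M ≤ (#B - t) * K) :
    ∃ R ⊆ B, #R = t ∧ #(collisions ψ A R) ≤ t * (t * K) := by
  suffices ∀ i ≤ t, ∃ R ⊆ B, #R = i ∧ #(collisions ψ A R) ≤ i * (t * K) from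
    this t le_rfl
  intro i
  induction i with
  | zero => exact fun _ => ⟨∅, empty_subset _, rfl, by simp [collisions]⟩
  | succ i ih =>
    intro hi
    obtain ⟨R, hRB, hRi, hcoll⟩ := ih (by omega)
    have hcard : #(B \ R) = #B - i := by rw [card_sdiff_of_subset hRB, hRi]
    obtain ⟨y, hy, hyR⟩ := exists_mem_sdiff_few_agreements A M hlight
      (show (B \ R).Nonempty from card_pos.1 (by omega))
    have hfew : ∑ y' ∈ R, #{x ∈ A | ψ x y' = ψ x y} ≤ t * K := by
      refine le_of_mul_le_mul_left ?_ (show 0 < #(B \ R) by omega)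
      calc #(B \ R) * ∑ y' ∈ R, #{x ∈ A | ψ x y' = ψ x y}
          ≤ i * ((#B - t) * K) := by rw [← hRi]; exact hyR.trans (by gcongr)
        _ ≤ t * ((#B - i) * K) := by gcongr <;> omega
        _ = #(B \ R) * (t * K) := by rw [hcard]; ring
    refine ⟨insert y R, insert_subset (mem_sdiff.1 hy).1 hRB, ?_, ?_⟩
    · rw [card_insert_of_notMem (mem_sdiff.1 hy).2, hRi]
    · calc #(collisions ψ A (insert y R)) ≤ i * (t * K) + t * K :=
            (card_collisions_insert_le A R y).trans (by gcongr)
        _ = (i + 1) * (t * K) := by ring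

theorem exists_insert_injOn_grid [DecidableEq α] {A S : Finset α} {R : Finset β} {M : ℕ}
    (hinj : ∀ x ∈ A, Set.InjOn (ψ x) R) (hlight : ∀ y ∈ R, ∀ c, #{x ∈ A | ψ x y = c} ≤ M)
    (hS : Set.InjOn (Function.uncurry ψ) (↑S ×ˢ ↑R))
    (hcard : #S + #S * (#R * (#R * M)) < #A) :
    ∃ x ∈ A, x ∉ S ∧ Set.InjOn (Function.uncurry ψ) (↑(insert x S) ×ˢ ↑R) := by
  set bad := S ∪ S.biUnion fun x' => R.biUnion fun y' => R.biUnion fun y =>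
    {x ∈ A | ψ x y = ψ x' y'}
  have hbad : #bad < #A := by
    refine lt_of_le_of_lt ((card_union_le _ _).trans ?_) hcard
    gcongr
    exact card_biUnion_le_card_mul _ _ _ fun x' _ =>
      card_biUnion_le_card_mul _ _ _ fun y' _ =>
        card_biUnion_le_card_mul _ _ _ fun y hy => hlight y hy _
  obtain ⟨x, hxA, hxbad⟩ := exists_mem_notMem_of_card_lt_card hbad
  have hfresh : ∀ x' ∈ S, ∀ y ∈ R, ∀ y' ∈ R, ψ x y ≠ ψ x' y' := fun x' hx' y hy y' hy' h =>
    hxbad (mem_union_right _ (mem_biUnion.2 ⟨x', hx', mem_biUnion.2 ⟨y', hy',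
      mem_biUnion.2 ⟨y, hy, mem_filter.2 ⟨hxA, h⟩⟩⟩⟩))
  refine ⟨x, hxA, fun hx => hxbad (mem_union_left _ hx), ?_⟩
  rintro ⟨a, b⟩ ⟨ha, hb⟩ ⟨a', b'⟩ ⟨ha', hb'⟩ h
  simp only [coe_insert, Set.mem_insert_iff, mem_coe, Function.uncurry_apply_pair]
    at ha ha' hb hb' h
  rcases ha with rfl | ha <;> rcases ha' with rfl | ha'
  · rw [hinj _ hxA hb hb' h]
  · exact absurd h (hfresh a' ha' b hb b' hb')
  · exact absurd h.symm (hfresh a ha b' hb' b hb)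
  · exact hS (Set.mk_mem_prod ha hb) (Set.mk_mem_prod ha' hb') h

theorem exists_injOn_grid (A : Finset α) (R : Finset β) (t M : ℕ)
    (hinj : ∀ x ∈ A, Set.InjOn (ψ x) R) (hlight : ∀ y ∈ R, ∀ c, #{x ∈ A | ψ x y = c} ≤ M)
    (hA : t * (1 + #R * (#R * M)) ≤ #A) :
    ∃ S ⊆ A, #S = t ∧ Set.InjOn (Function.uncurry ψ) (↑S ×ˢ ↑R) := by
  classical
  suffices ∀ i ≤ t, ∃ S ⊆ A, #S = i ∧ Set.InjOn (Function.uncurry ψ) (↑S ×ˢ ↑R) from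
    this t le_rfl
  intro i
  induction i with
  | zero => exact fun _ => ⟨∅, empty_subset _, rfl, by simp⟩
  | succ i ih =>
    intro hi
    obtain ⟨S, hSA, hSi, hS⟩ := ih (by omega)
    have hcard : #S + #S * (#R * (#R * M)) < #A := by
      rw [hSi]
      calc i + i * (#R * (#R * M)) = i * (1 + #R * (#R * M)) := by ring
        _ < t * (1 + #R * (#R * M)) := by gcongr; omega
        _ ≤ #A := hA
    obtain ⟨x, hxA, hxS, hins⟩ := exists_insert_injOn_grid hinj hlight hS hcard
    exact ⟨insert x S, insert_subset hxA hSA, by rw [card_insert_of_notMem hxS, hSi], hins⟩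

theorem exists_canonicalGrid_of_light (A : Finset α) (B : Finset β) (t Mc Mr K : ℕ)
    (hcol : ∀ x ∈ A, ∀ c, #{y ∈ B | ψ x y = c} ≤ Mc)
    (hrow : ∀ y ∈ B, ∀ c, #{x ∈ A | ψ x y = c} ≤ Mr) (htB : t ≤ #B)
    (hK : #A * Mc ≤ (#B - t) * K) (hA : t * (1 + t * (t * Mr)) + t * (t * K) ≤ #A) :
    ∃ S ⊆ A, ∃ T ⊆ B, #S = t ∧ #T = t ∧ IsCanonicalGrid ψ S T := by
  classical
  obtain ⟨R, hRB, hRt, hcoll⟩ := exists_rows_few_collisions A B t Mc K hcol htB hK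
  obtain ⟨S, hS, hSt, hinj⟩ := exists_injOn_grid (A \ collisions ψ A R) R t Mr
    (fun x hx => injOn_of_notMem_collisions (mem_sdiff.1 hx).1 (mem_sdiff.1 hx).2)
    (fun y hy c => (card_le_card (filter_subset_filter _ sdiff_subset)).trans
      (hrow y (hRB hy) c))
    (by rw [card_sdiff_of_subset (collisions_subset A R), hRt]; omega)
  exact ⟨S, hS.trans sdiff_subset, R, hRB, hSt, hRt, isCanonicalGrid_of_injOn hinj⟩

end Light

theorem pow_le_nine_pow_mul_sub_pow {t m e : ℕ} (hm : 2 * m ≤ t) (he : e ≤ t) :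
    t ^ e ≤ 9 ^ m * (t - m) ^ e := by
  obtain ⟨a, rfl⟩ : ∃ a, t = a + m := ⟨t - m, by omega⟩
  rcases Nat.eq_zero_or_pos a with rfl | ha
  · obtain rfl : m = 0 := by omega
    simp
  rw [Nat.add_sub_cancel]
  have haR : (0 : ℝ) < a := by exact_mod_cast ha
  have hexp : (a + m : ℝ) ≤ a * Real.exp (m / a) := by
    have := Real.add_one_le_exp (m / a)
    rw [div_add_one haR.ne', div_le_iff₀' haR] at this
    linarith
  have hexp9 : Real.exp (e * (m / a)) ≤ 9 ^ m :=
    calc Real.exp (e * (m / a)) ≤ Real.exp (2 * m) := by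
          rw [Real.exp_le_exp, ← mul_div_assoc, div_le_iff₀ haR]
          have : (e : ℝ) ≤ a + m := by exact_mod_cast he
          have : (m : ℝ) ≤ a := by exact_mod_cast (by omega : m ≤ a)
          nlinarith
      _ = Real.exp 2 ^ m := by rw [← Real.exp_nat_mul]; ring_nf
      _ ≤ 9 ^ m := by
          gcongr
          calc Real.exp 2 = Real.exp 1 ^ 2 := by rw [← Real.exp_nat_mul]; norm_num
            _ ≤ 3 ^ 2 := by gcongr; exact Real.exp_one_lt_three.le
            _ = 9 := by norm_num
  have : ((a + m : ℕ) : ℝ) ^ e ≤ 9 ^ m * (a : ℝ) ^ e :=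
    calc ((a + m : ℕ) : ℝ) ^ e ≤ (a * Real.exp (m / a)) ^ e := by push_cast; gcongr
      _ = Real.exp (e * (m / a)) * (a : ℝ) ^ e := by rw [mul_pow, Real.exp_nat_mul]; ring
      _ ≤ 9 ^ m * (a : ℝ) ^ e := by gcongr
  exact_mod_cast this

theorem pow_le_two_mul_sub_pow {m d k : ℕ} (h : 2 * k * d ≤ m) : m ^ k ≤ 2 * (m - d) ^ k := by
  rcases Nat.eq_zero_or_pos k with rfl | hk
  · simp
  rcases Nat.eq_zero_or_pos m with rfl | hm
  · simp [hk.ne']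
  have hdm : d ≤ m := by nlinarith
  have hmR : (0 : ℝ) < m := by exact_mod_cast hm
  have hbern : (1 : ℝ) / 2 ≤ (1 + -(d / m : ℝ)) ^ k := by
    refine le_trans ?_ (one_add_mul_le_pow ?_ k)
    · have : (2 * k * d : ℝ) ≤ m := by exact_mod_cast h
      rw [mul_neg, ← mul_div_assoc]
      have : (k * d : ℝ) / m ≤ 1 / 2 := by rw [div_le_iff₀ hmR]; linarith
      linarith
    · have : (d : ℝ) / m ≤ 1 := by rw [div_le_one hmR]; exact_mod_cast hdm
      linarith
  have : (m : ℝ) ^ k ≤ 2 * ((m - d : ℕ) : ℝ) ^ k :=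
    calc (m : ℝ) ^ k = 2 * (m ^ k * (1 / 2)) := by ring
      _ ≤ 2 * (m ^ k * (1 + -(d / m : ℝ)) ^ k) := by gcongr
      _ = 2 * ((m - d : ℕ) : ℝ) ^ k := by
          rw [← mul_pow, Nat.cast_sub hdm]; congr 2; field_simp; ring
  exact_mod_cast this

section Parameters

variable {t s : ℕ}

/- With `s = t^(3t-1)` we have `n = t^(3(t+1)) = t^4 s`; rows are heavy at `(t-6)s` and columns
at `ts`. The slack `6s` in the row threshold is what the light case consumes; in the row count
it costs the factor `(1 - 7/t)^t ≥ 9^(-7)`, whence the bound on `t`. -/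

theorem heavyRows_count_bound (hs : s = t ^ (3 * t - 1)) (ht : 2 * 9 ^ 7 ≤ t) :
    2 * (t * t * (t ^ 4 * s) ^ t) ≤ t ^ 4 * s * ((t - 6) * s + 1 - t) ^ t := by
  obtain ⟨k, hk⟩ : ∃ k, t = k + 1 := ⟨t - 1, by omega⟩
  have hs' : s = t ^ (3 * k + 2) := by rw [hs]; congr 1; omega
  have hts : t ≤ s := hs ▸ Nat.le_self_pow (by omega) t
  have hsub : (t - 7) * s ≤ (t - 6) * s + 1 - t := by
    have : (t - 6) * s = (t - 7) * s + s := by rw [← Nat.succ_mul]; congr 1; omega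
    omega
  have key : 2 * t ^ t ≤ t * (t - 7) ^ t :=
    calc 2 * t ^ t ≤ 2 * (9 ^ 7 * (t - 7) ^ t) := by
          gcongr; exact pow_le_nine_pow_mul_sub_pow (by omega) le_rfl
      _ ≤ t * (t - 7) ^ t := by rw [← mul_assoc]; gcongr
  have e : ∀ x : ℕ, x ^ t = x ^ (k + 1) := fun x => by rw [hk]
  simp only [e] at key ⊢
  calc 2 * (t * t * (t ^ 4 * s) ^ (k + 1))
      = t ^ 4 * s * (t ^ (3 * k + 1) * (2 * t ^ (k + 1)) * s ^ k) := by ring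
    _ ≤ t ^ 4 * s * (t ^ (3 * k + 1) * (t * (t - 7) ^ (k + 1)) * s ^ k) := by gcongr
    _ = t ^ 4 * s * ((t - 7) * s) ^ (k + 1) := by rw [hs']; ring
    _ ≤ t ^ 4 * s * ((t - 6) * s + 1 - t) ^ (k + 1) := by gcongr

theorem heavyCols_count_bound (hs : s = t ^ (3 * t - 1)) (ht : 2 ≤ t) :
    t * (t * t * (t ^ 4 * s) ^ t) ≤ 2 * (t ^ 4 * s) * (t * s + 1 - t) ^ t := by
  obtain ⟨k, hk⟩ : ∃ k, t = k + 1 := ⟨t - 1, by omega⟩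
  have hs' : s = t ^ (3 * k + 2) := by rw [hs]; congr 1; omega
  have h2ts : 2 * t ≤ s := by
    calc 2 * t ≤ t * t := by gcongr
      _ = t ^ 2 := (sq t).symm
      _ ≤ s := hs' ▸ Nat.pow_le_pow_right (by omega) (by omega)
  have htts : t ≤ t * s := Nat.le_mul_of_pos_right t (by omega)
  have e : ∀ x : ℕ, x ^ t = x ^ (k + 1) := fun x => by rw [hk]
  simp only [e]
  calc t * (t * t * (t ^ 4 * s) ^ (k + 1)) = t ^ 4 * s * (t * s) ^ (k + 1) := by rw [hs']; ring
    _ ≤ t ^ 4 * s * (2 * (t * s - (t - 1)) ^ (k + 1)) := by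
        gcongr
        refine pow_le_two_mul_sub_pow ?_
        calc 2 * (k + 1) * (t - 1) ≤ 2 * t * t := by rw [← hk]; gcongr; omega
          _ = t * (2 * t) := by ring
          _ ≤ t * s := by gcongr
    _ = 2 * (t ^ 4 * s) * (t * s + 1 - t) ^ (k + 1) := by
        rw [show t * s - (t - 1) = t * s + 1 - t by omega]; ring

theorem light_count_bound (hs : s = t ^ (3 * t - 1)) (ht : 6 ≤ t) :
    t * (t * (1 + t * (t * ((t - 6) * s))) + t * (t * (3 * (t * s)))) + 2 * (t ^ 4 * s) ≤
      t * (t ^ 4 * s) := by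
  have hs1 : 1 ≤ s := hs ▸ Nat.one_le_pow _ _ (by omega)
  have hsq : t ^ 2 ≤ t ^ 4 * s :=
    calc t ^ 2 ≤ t ^ 4 := Nat.pow_le_pow_right (by omega) (by omega)
      _ ≤ t ^ 4 * s := Nat.le_mul_of_pos_right _ hs1
  obtain ⟨u, rfl⟩ : ∃ u, t = u + 6 := ⟨t - 6, by omega⟩
  rw [Nat.add_sub_cancel]
  nlinarith

end Parameters

theorem exists_canonicalGrid_of_few_heavy [DecidableEq γ] {t s n : ℕ} (hs : s = t ^ (3 * t - 1))
    (hn : t ^ 4 * s = n) (ht : 6 ≤ t) (htn : 6 * t ≤ n) {X : Finset α} {Y : Finset β}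
    (hX : #X = n) (hY : #Y = n) (ψ : α → β → γ)
    (hR : 2 * #(heavyRows ψ X Y ((t - 6) * s)) < n)
    (hC : t * #(heavyRows (flip ψ) Y X (t * s)) < 2 * n) :
    ∃ S ⊆ X, ∃ T ⊆ Y, #S = t ∧ #T = t ∧ IsCanonicalGrid ψ S T := by
  classical
  set HR := heavyRows ψ X Y ((t - 6) * s)
  set HC := heavyRows (flip ψ) Y X (t * s)
  have hA : #(X \ HC) = n - #HC := by rw [card_sdiff_of_subset (heavyRows_subset _ _ _ _), hX]
  have hB : #(Y \ HR) = n - #HR := by rw [card_sdiff_of_subset (heavyRows_subset _ _ _ _), hY]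
  have hHC : #HC ≤ n := hX ▸ card_le_card (heavyRows_subset _ _ _ _)
  have hK : #(X \ HC) * (t * s) ≤ (#(Y \ HR) - t) * (3 * (t * s)) :=
    calc #(X \ HC) * (t * s) ≤ (#(Y \ HR) - t) * 3 * (t * s) := by gcongr; omega
      _ = (#(Y \ HR) - t) * (3 * (t * s)) := by ring
  have hAbig : t * (1 + t * (t * ((t - 6) * s))) + t * (t * (3 * (t * s))) ≤ #(X \ HC) := by
    refine Nat.le_of_mul_le_mul_left ?_ (by omega : 0 < t)
    have hcount := light_count_bound hs ht
    rw [hn] at hcount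
    rw [hA, Nat.mul_sub]
    omega
  obtain ⟨S, hS, T, hT, hSt, hTt, hcan⟩ :=
    exists_canonicalGrid_of_light (X \ HC) (Y \ HR) t _ _ _
      (fun x hx => card_filter_le_of_notMem_heavyRows (ψ := flip ψ) sdiff_subset
        (mem_sdiff.1 hx).1 (mem_sdiff.1 hx).2)
      (fun y hy => card_filter_le_of_notMem_heavyRows sdiff_subset (mem_sdiff.1 hy).1
        (mem_sdiff.1 hy).2) (by omega) hK hAbig
  exact ⟨S, hS.trans sdiff_subset, T, hT.trans sdiff_subset, hSt, hTt, hcan⟩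

theorem exists_canonicalGrid {t : ℕ} (ht : 2 * 9 ^ 7 ≤ t) (X : Finset α) (Y : Finset β)
    (hX : #X = t ^ (3 * (t + 1))) (hY : #Y = t ^ (3 * (t + 1))) (ψ : α → β → γ) :
    ∃ S ⊆ X, ∃ T ⊆ Y, #S = t ∧ #T = t ∧ IsCanonicalGrid ψ S T := by
  classical
  obtain ⟨s, hs⟩ : ∃ s, s = t ^ (3 * t - 1) := ⟨_, rfl⟩
  obtain ⟨n, hn⟩ : ∃ n, t ^ 4 * s = n := ⟨_, rfl⟩
  have hXn : #X = n := by rw [hX, ← hn, hs, ← pow_add]; congr 1; omega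
  have hYn : #Y = n := hY.trans (hX.symm.trans hXn)
  have htn : 6 * t ≤ n :=
    calc 6 * t ≤ t ^ 4 := by nlinarith [Nat.pow_le_pow_left (show 6 ≤ t by omega) 3]
      _ ≤ n := hn ▸ Nat.le_mul_of_pos_right _ (hs ▸ by positivity)
  have : Nonempty α := (card_pos.1 (by omega : 0 < #X)).to_subtype.map Subtype.val
  have : Nonempty β := (card_pos.1 (by omega : 0 < #Y)).to_subtype.map Subtype.val
  by_cases hR : n ≤ 2 * #(heavyRows ψ X Y ((t - 6) * s))
  · refine exists_canonicalGrid_of_heavyRows ψ X Y t ((t - 6) * s) (by omega) ?_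
    refine Nat.le_of_mul_le_mul_left ?_ two_pos
    have hcount := heavyRows_count_bound hs ht
    rw [hn] at hcount
    rw [hXn]
    exact hcount.trans (by rw [← mul_assoc]; exact Nat.mul_le_mul_right _ hR)
  by_cases hC : 2 * n ≤ t * #(heavyRows (flip ψ) Y X (t * s))
  · obtain ⟨T, hT, S, hS, hTt, hSt, hcan⟩ :=
      exists_canonicalGrid_of_heavyRows (flip ψ) Y X t (t * s) (by omega) <| by
        refine Nat.le_of_mul_le_mul_left ?_ (by omega : 0 < t)
        have hcount := heavyCols_count_bound hs (by omega)
        rw [hn] at hcount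
        rw [hYn]
        exact hcount.trans (by rw [← mul_assoc]; exact Nat.mul_le_mul_right _ hC)
    exact ⟨S, hS, T, hT, hSt, hTt, hcan.flip⟩
  exact exists_canonicalGrid_of_few_heavy hs hn (by omega) htn hXn hYn ψ (not_le.1 hR)
    (not_le.1 hC)

end CanonicalRamsey

/-- **Canonical Ramsey numbers for bipartite graphs.**
For all sufficiently large `t`, every colouring `φ` of the edges of the complete
bipartite graph with both vertex classes of size `n = t^(3(t+1))` yields a canonical
copy of `K_{t,t}`, i.e. classes `U i ⊆ V i` of size `t` and a set `J ⊆ [2]` such that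
two edges of the copy get the same colour iff they agree on the coordinates in `J`.
Edges are encoded as transversal functions `e : Fin 2 → ℕ` with `e i ∈ V i`. -/
theorem canonical_ramsey_bipartite :
    ∃ t₀ : ℕ, ∀ t : ℕ, t₀ ≤ t →
      ∀ V : Fin 2 → Finset ℕ, (∀ i, (V i).card = t ^ (3 * (t + 1))) →
        ∀ φ : (Fin 2 → ℕ) → ℕ,
          ∃ (U : Fin 2 → Finset ℕ) (J : Finset (Fin 2)),
            (∀ i, U i ⊆ V i) ∧ (∀ i, (U i).card = t) ∧
            ∀ e ∈ Fintype.piFinset U, ∀ e' ∈ Fintype.piFinset U,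
              (φ e = φ e' ↔ ∀ j ∈ J, e j = e' j) := by
  refine ⟨2 * 9 ^ 7, fun t ht V hV φ => ?_⟩
  obtain ⟨S, hS, T, hT, hSt, hTt, p, q, hcan⟩ :=
    CanonicalRamsey.exists_canonicalGrid ht (V 0) (V 1) (hV 0) (hV 1) fun x y => φ ![x, y]
  classical
  refine ⟨![S, T], ({i | ![p, q] i} : Finset (Fin 2)), Fin.forall_fin_two.2 ⟨hS, hT⟩,
    Fin.forall_fin_two.2 ⟨hSt, hTt⟩, fun e he e' he' => ?_⟩
  simp only [Fintype.mem_piFinset, Fin.forall_fin_two, Matrix.cons_val_zero,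
    Matrix.cons_val_one] at he he'
  have hpair : ∀ f : Fin 2 → ℕ, ![f 0, f 1] = f := fun f => by ext i; fin_cases i <;> rfl
  rw [← hpair e, ← hpair e', hcan _ he.1 _ he'.1 _ he.2 _ he'.2]
  simp [Fin.forall_fin_two]
end

section
/- Let k ≥ 2, let H = (V₁ ∪̇ … ∪̇ V_k, E) be a k-partite k-uniform hypergraph, let δ ∈ (0,1], and let 0 ≤ j ≤ k−2. If a colouring φ: E → ℕ is (δ²/(1+δ), j+1)-bounded, then φ is (δ, j)-bounded. -/
open Finset

/-- The set `V_J` of `J`-patterns: partial transversals picking one vertex of `V j`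
for each `j ∈ J`, encoded as functions that are `0` outside `J`.  It has
cardinality `∏_{j ∈ J} |V j|`. -/
def patterns {k : ℕ} (V : Fin k → Finset ℕ) (J : Finset (Fin k)) : Finset (Fin k → ℕ) :=
  Fintype.piFinset fun j => if j ∈ J then V j else {0}

/-- A colouring `φ` of the edge set `E` of a `k`-partite `k`-uniform hypergraph
(edges are transversals `e : Fin k → ℕ`, `e i ∈ V i`) is `(δ, J)`-bounded if all but
at most `δ ∏_{j∈J} |V j|` of the patterns `S ∈ V_J` satisfy, for every colour `ℓ`,
`|{e ∈ E : e_J = S, φ e = ℓ}| ≤ δ ∏_{j∉J} |V j|`. -/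
def BoundedOn {k : ℕ} (V : Fin k → Finset ℕ) (E : Finset (Fin k → ℕ))
    (φ : (Fin k → ℕ) → ℕ) (δ : ℝ) (J : Finset (Fin k)) : Prop :=
  ∃ B ⊆ patterns V J,
    (B.card : ℝ) ≤ δ * ∏ j ∈ J, ((V j).card : ℝ) ∧
    ∀ S ∈ patterns V J, S ∉ B → ∀ ℓ : ℕ,
      ((E.filter fun e => (∀ j ∈ J, e j = S j) ∧ φ e = ℓ).card : ℝ)
        ≤ δ * ∏ j ∈ Finset.univ \ J, ((V j).card : ℝ)

/-!
Fix a class `i ∉ J` and a threshold `τ > 0`, and let `B'` be the exceptional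
`(J ∪ {i})`-patterns of a `(δτ, J ∪ {i})`-bounded colouring. Call a `J`-pattern `S` heavy
if more than `τ |V_i|` of its extensions `S ∪ {v}`, `v ∈ V_i`, lie in `B'`. Double counting
`B'` shows that at most `δ |V_J|` patterns are heavy. For a light pattern, split each colour
class by the vertex in `V_i`: extensions in `B'` contribute at most
`τ |V_i| · |V_{[k] ∖ (J ∪ {i})}|` edges, the others at most `δτ |V_{[k] ∖ J}|`, which adds up
to `δ |V_{[k] ∖ J}|` once `τ (1 + δ) ≤ δ`. The theorem is the case `τ = δ / (1 + δ)`.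
-/

lemma Finset.card_filter_lt_mul_le_sum {α : Type*} (s : Finset α) (f : α → ℝ) (t : ℝ)
    (hf : ∀ a ∈ s, 0 ≤ f a) : #(s.filter fun a => t < f a) * t ≤ ∑ a ∈ s, f a := by
  rw [← nsmul_eq_mul]
  calc #(s.filter fun a => t < f a) • t
      ≤ ∑ a ∈ s.filter fun a => t < f a, f a :=
        card_nsmul_le_sum _ _ _ fun a ha => (mem_filter.1 ha).2.le
    _ ≤ ∑ a ∈ s, f a :=
        sum_le_sum_of_subset_of_nonneg (filter_subset _ _) fun a ha _ => hf a ha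

lemma Finset.sum_le_card_filter_mul_add_card_mul {α : Type*} (s : Finset α) (p : α → Prop)
    [DecidablePred p] (f : α → ℝ) {Q c : ℝ} (hQ : ∀ a ∈ s, f a ≤ Q)
    (hc : ∀ a ∈ s, ¬ p a → f a ≤ c) (hc0 : 0 ≤ c) :
    ∑ a ∈ s, f a ≤ #(s.filter p) * Q + #s * c := by
  rw [← sum_filter_add_sum_filter_not s p]
  gcongr
  · simpa using sum_le_card_nsmul _ f Q fun a ha => hQ a (mem_filter.1 ha).1
  · calc ∑ a ∈ s.filter fun a => ¬ p a, f a
        ≤ #(s.filter fun a => ¬ p a) * c := by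
          simpa using sum_le_card_nsmul _ f c fun a ha =>
            hc a (mem_filter.1 ha).1 (mem_filter.1 ha).2
      _ ≤ #s * c := by gcongr; exact filter_subset _ _

section

variable {k : ℕ} {V : Fin k → Finset ℕ} {J : Finset (Fin k)} {i : Fin k} {S : Fin k → ℕ}

lemma mem_patterns : S ∈ patterns V J ↔ ∀ j, S j ∈ if j ∈ J then V j else {0} :=
  Fintype.mem_piFinset

lemma apply_eq_zero_of_mem_patterns (hi : i ∉ J) (hS : S ∈ patterns V J) : S i = 0 := by
  simpa [hi] using mem_patterns.1 hS i

lemma update_mem_patterns_insert (hS : S ∈ patterns V J) {v : ℕ} (hv : v ∈ V i) :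
    Function.update S i v ∈ patterns V (insert i J) := by
  refine mem_patterns.2 fun t => ?_
  rcases eq_or_ne t i with rfl | hti
  · simpa using hv
  · simpa [hti] using mem_patterns.1 hS t

lemma update_zero_mem_patterns (hi : i ∉ J) (hS : S ∈ patterns V (insert i J)) :
    Function.update S i 0 ∈ patterns V J := by
  refine mem_patterns.2 fun t => ?_
  rcases eq_or_ne t i with rfl | hti
  · simp [hi]
  · simpa [hti] using mem_patterns.1 hS t

def badExtensions (V : Fin k → Finset ℕ) (B : Finset (Fin k → ℕ)) (i : Fin k)
    (S : Fin k → ℕ) : Finset ℕ :=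
  (V i).filter fun v => Function.update S i v ∈ B

lemma sum_card_badExtensions_le {B : Finset (Fin k → ℕ)} (hi : i ∉ J)
    (hB : B ⊆ patterns V (insert i J)) :
    ∑ S ∈ patterns V J, #(badExtensions V B i S) ≤ #B := by
  rw [card_eq_sum_card_fiberwise fun S' hS' => update_zero_mem_patterns hi (hB hS')]
  refine sum_le_sum fun S hS => card_le_card_of_injOn (Function.update S i) ?_
    (Function.update_injective S i).injOn
  intro v hv
  simp only [badExtensions, mem_coe, mem_filter] at hv ⊢
  refine ⟨hv.2, ?_⟩
  rw [Function.update_idem, ← apply_eq_zero_of_mem_patterns hi hS, Function.update_eq_self]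

def colourClass (E : Finset (Fin k → ℕ)) (φ : (Fin k → ℕ) → ℕ) (J : Finset (Fin k))
    (S : Fin k → ℕ) (ℓ : ℕ) : Finset (Fin k → ℕ) :=
  E.filter fun e => (∀ j ∈ J, e j = S j) ∧ φ e = ℓ

variable {E : Finset (Fin k → ℕ)} {φ : (Fin k → ℕ) → ℕ} {ℓ : ℕ}

lemma card_colourClass_le_prod (hE : E ⊆ Fintype.piFinset V) :
    #(colourClass E φ J S ℓ) ≤ ∏ t ∈ univ \ J, #(V t) := by
  calc #(colourClass E φ J S ℓ)
      ≤ #(Fintype.piFinset fun t => if t ∈ J then {S t} else V t) := by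
        refine card_le_card fun e he => ?_
        obtain ⟨heE, hJ, -⟩ := mem_filter.1 he
        refine Fintype.mem_piFinset.2 fun t => ?_
        split_ifs with ht
        · exact mem_singleton.2 (hJ t ht)
        · exact Fintype.mem_piFinset.1 (hE heE) t
    _ = ∏ t ∈ univ \ J, #(V t) := by
        simp [Fintype.card_piFinset, apply_ite card, prod_ite, filter_not]

lemma filter_colourClass_apply_eq (hi : i ∉ J) (v : ℕ) :
    (colourClass E φ J S ℓ).filter (fun e => e i = v)
      = colourClass E φ (insert i J) (Function.update S i v) ℓ := by
  ext e
  have hJ : (∀ j ∈ J, e j = Function.update S i v j) ↔ ∀ j ∈ J, e j = S j :=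
    forall₂_congr fun j hj => by rw [Function.update_of_ne (ne_of_mem_of_not_mem hj hi)]
  simp only [colourClass, mem_filter, forall_mem_insert, Function.update_self, hJ]
  tauto

lemma card_colourClass_eq_sum (hE : E ⊆ Fintype.piFinset V) (hi : i ∉ J) :
    #(colourClass E φ J S ℓ)
      = ∑ v ∈ V i, #(colourClass E φ (insert i J) (Function.update S i v) ℓ) := by
  rw [card_eq_sum_card_fiberwise (s := colourClass E φ J S ℓ) (f := fun e => e i)
    fun e he => Fintype.mem_piFinset.1 (hE (mem_filter.1 he).1) i]
  exact sum_congr rfl fun v _ => by rw [filter_colourClass_apply_eq hi]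

variable {B' : Finset (Fin k → ℕ)} {δ τ : ℝ}

noncomputable def heavyPatterns (V : Fin k → Finset ℕ) (J : Finset (Fin k))
    (B' : Finset (Fin k → ℕ)) (i : Fin k) (τ : ℝ) : Finset (Fin k → ℕ) :=
  (patterns V J).filter fun S => τ * #(V i) < (#(badExtensions V B' i S) : ℝ)

lemma card_heavyPatterns_le (hi : i ∉ J) (hτ : 0 < τ) (hδ : 0 ≤ δ)
    (hB' : B' ⊆ patterns V (insert i J))
    (hB'card : (#B' : ℝ) ≤ δ * τ * ∏ t ∈ insert i J, (#(V t) : ℝ)) :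
    (#(heavyPatterns V J B' i τ) : ℝ) ≤ δ * ∏ t ∈ J, (#(V t) : ℝ) := by
  set B := heavyPatterns V J B' i τ
  rcases eq_or_ne #(V i) 0 with hV | hV
  · have hB : B = ∅ := filter_eq_empty_iff.2 fun S _ hS => by
      have hle : (#(badExtensions V B' i S) : ℝ) ≤ #(V i) := by
        exact_mod_cast card_filter_le _ _
      rw [hV, Nat.cast_zero] at hS hle
      linarith
    rw [hB, card_empty, Nat.cast_zero]
    exact mul_nonneg hδ (prod_nonneg fun _ _ => Nat.cast_nonneg _)
  · have hpos : 0 < τ * #(V i) := mul_pos hτ (Nat.cast_pos.2 (Nat.pos_of_ne_zero hV))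
    rw [← mul_le_mul_iff_of_pos_right hpos]
    calc #B * (τ * #(V i))
        ≤ ∑ S ∈ patterns V J, (#(badExtensions V B' i S) : ℝ) :=
          card_filter_lt_mul_le_sum _ _ _ fun _ _ => Nat.cast_nonneg _
      _ ≤ #B' := by exact_mod_cast sum_card_badExtensions_le hi hB'
      _ ≤ δ * τ * ∏ t ∈ insert i J, (#(V t) : ℝ) := hB'card
      _ = (δ * ∏ t ∈ J, (#(V t) : ℝ)) * (τ * #(V i)) := by rw [prod_insert hi]; ring

lemma card_colourClass_le_of_notMem_heavyPatterns (hE : E ⊆ Fintype.piFinset V) (hi : i ∉ J)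
    (hτ : 0 < τ) (hδ : 0 ≤ δ) (hτδ : τ * (1 + δ) ≤ δ) (hS : S ∈ patterns V J)
    (hB'good : ∀ S' ∈ patterns V (insert i J), S' ∉ B' → ∀ ℓ : ℕ,
      (#(colourClass E φ (insert i J) S' ℓ) : ℝ)
        ≤ δ * τ * ∏ t ∈ univ \ insert i J, (#(V t) : ℝ))
    (hlight : S ∉ heavyPatterns V J B' i τ) :
    (#(colourClass E φ J S ℓ) : ℝ) ≤ δ * ∏ t ∈ univ \ J, (#(V t) : ℝ) := by
  set Q := ∏ t ∈ univ \ insert i J, (#(V t) : ℝ)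
  have hQ0 : 0 ≤ Q := prod_nonneg fun _ _ => Nat.cast_nonneg _
  have hQ : ∀ S' ℓ, (#(colourClass E φ (insert i J) S' ℓ) : ℝ) ≤ Q := fun S' ℓ => by
    simpa only [Q, Nat.cast_prod] using
      (Nat.cast_le (α := ℝ)).2 (card_colourClass_le_prod (S := S') (ℓ := ℓ) hE)
  rw [card_colourClass_eq_sum hE hi, Nat.cast_sum,
    ← mul_prod_erase _ _ (mem_sdiff.2 ⟨mem_univ i, hi⟩), ← sdiff_insert]
  calc ∑ v ∈ V i, (#(colourClass E φ (insert i J) (Function.update S i v) ℓ) : ℝ)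
      ≤ #(badExtensions V B' i S) * Q + #(V i) * (δ * τ * Q) :=
        sum_le_card_filter_mul_add_card_mul _ _ _ (fun v _ => hQ _ ℓ)
          (fun v hv hvB' => hB'good _ (update_mem_patterns_insert hS hv) hvB' ℓ)
          (mul_nonneg (mul_nonneg hδ hτ.le) hQ0)
    _ ≤ τ * #(V i) * Q + #(V i) * (δ * τ * Q) :=
        add_le_add_left (mul_le_mul_of_nonneg_right
          (not_lt.1 fun h => hlight (mem_filter.2 ⟨hS, h⟩)) hQ0) _
    _ = τ * (1 + δ) * (#(V i) * Q) := by ring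
    _ ≤ δ * (#(V i) * Q) :=
        mul_le_mul_of_nonneg_right hτδ (mul_nonneg (Nat.cast_nonneg _) hQ0)

theorem BoundedOn.of_insert (hE : E ⊆ Fintype.piFinset V) (hi : i ∉ J) (hτ : 0 < τ)
    (hδ : 0 ≤ δ) (hτδ : τ * (1 + δ) ≤ δ) (h : BoundedOn V E φ (δ * τ) (insert i J)) :
    BoundedOn V E φ δ J := by
  obtain ⟨B', hB', hB'card, hB'good⟩ := h
  exact ⟨heavyPatterns V J B' i τ, filter_subset _ _,
    card_heavyPatterns_le hi hτ hδ hB' hB'card,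
    fun S hS hlight ℓ =>
      card_colourClass_le_of_notMem_heavyPatterns hE hi hτ hδ hτδ hS hB'good hlight⟩

end

/-- **Boundedness steps down:** for a `k`-partite `k`-uniform hypergraph with `k ≥ 2`,
`δ ∈ (0,1]` and `0 ≤ j ≤ k-2`, every `(δ²/(1+δ), j+1)`-bounded colouring
is `(δ, j)`-bounded. -/
theorem bounded_step_down (k : ℕ) (hk : 2 ≤ k)
    (V : Fin k → Finset ℕ) (E : Finset (Fin k → ℕ)) (hE : E ⊆ Fintype.piFinset V)
    (φ : (Fin k → ℕ) → ℕ) (δ : ℝ) (hδ : δ ∈ Set.Ioc (0 : ℝ) 1)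
    (j : ℕ) (hj : j ≤ k - 2)
    (hbdd : ∀ J : Finset (Fin k), J.card = j + 1 →
      BoundedOn V E φ (δ ^ 2 / (1 + δ)) J) :
    ∀ J : Finset (Fin k), J.card = j → BoundedOn V E φ δ J := by
  intro J hJ
  obtain ⟨i, -, hi⟩ : ∃ i ∈ univ, i ∉ J :=
    exists_mem_notMem_of_card_lt_card (by rw [card_univ, Fintype.card_fin]; omega)
  have h1δ : 0 < 1 + δ := by linarith [hδ.1]
  refine BoundedOn.of_insert hE hi (div_pos hδ.1 h1δ) hδ.1.le
    (div_mul_cancel₀ δ h1δ.ne').le ?_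
  convert hbdd (insert i J) (by rw [card_insert_of_notMem hi, hJ]) using 1
  ring
end

section
/- Let k ≥ 1, let δ ∈ (0,1], and let t, n be positive integers with (δ/4^{k−1})^{t^{k−1}} · n ≥ 2t. If φ: E(K^{(k)}_{n,…,n}) → ℕ is a colouring of the complete k-partite k-uniform hypergraph with all classes of size n in which some colour appears on at least δ·n^k edges, then there is a monochromatic copy of K^{(k)}_{t,…,t}, i.e., sets U_i ⊆ V_i with |U_i| = t for every i ∈ [k] such that φ is constant on the edges spanned by U₁,…,U_k. -/
/-!
Induction on the number of classes, splitting off the class `V 0`. For a transversal `e` of the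
other classes let `N e ⊆ V 0` be the set of `v` with `(v, e)` of the popular colour; these sets
have average size at least `δ n`. Jensen's inequality for `x ↦ x ^ t`, applied to `|N e| - t`,
and double counting over `t`-subsets of `V 0` give a `t`-set `S` lying in `N e` for a proportion
at least `(δ / 2) ^ t` of the transversals `e`. Those `e` form an edge set of density
`(δ / 2) ^ t` on the remaining classes, to which induction applies with `U 0 = S`. The
hypothesis `(δ / 4 ^ (k - 1)) ^ (t ^ (k - 1)) n ≥ 2 t` bounds from below every density reached
this way, which keeps `t` below half the average degree at each step.
-/

open Finset

section

variable {ι α : Type*}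

theorem pow_mul_card_le_sum_descFactorial (P : Finset ι) (d : ι → ℕ) {t : ℕ} {a : ℝ}
    (ht : 2 * t ≤ a) (hd : a * #P ≤ ∑ i ∈ P, (d i : ℝ)) :
    (a / 2) ^ t * #P ≤ ∑ i ∈ P, ((d i).descFactorial t : ℝ) := by
  rcases t with _ | s
  · simp
  set t := s + 1
  have hsum : a / 2 * #P ≤ ∑ i ∈ P, ((d i - t : ℕ) : ℝ) :=
    calc a / 2 * #P ≤ ∑ i ∈ P, ((d i : ℝ) - t) := by
          rw [sum_sub_distrib, sum_const, nsmul_eq_mul]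
          nlinarith [Nat.cast_nonneg (α := ℝ) #P]
      _ ≤ ∑ i ∈ P, ((d i - t : ℕ) : ℝ) :=
          sum_le_sum fun i _ => sub_le_iff_le_add.2 (by exact_mod_cast le_tsub_add)
  calc (a / 2) ^ t * #P = (a / 2 * #P) ^ t / (#P : ℝ) ^ s := by
        rcases eq_or_ne (#P : ℝ) 0 with hP | hP
        · simp [hP, t]
        · field_simp; ring
    _ ≤ (∑ i ∈ P, ((d i - t : ℕ) : ℝ)) ^ t / (#P : ℝ) ^ s := by
        gcongr
        nlinarith [Nat.cast_nonneg (α := ℝ) #P]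
    _ ≤ ∑ i ∈ P, ((d i - t : ℕ) : ℝ) ^ t :=
        pow_sum_div_card_le_sum_pow (fun _ _ => by positivity) s
    _ ≤ ∑ i ∈ P, ((d i).descFactorial t : ℝ) := by
        gcongr with i
        exact_mod_cast (Nat.pow_le_pow_left (by omega) t).trans
          (Nat.pow_sub_le_descFactorial (d i) t)

theorem sum_card_filter_subset_eq_sum_choose [DecidableEq α] (P : Finset ι) (W : Finset α)
    (N : ι → Finset α) (hN : ∀ i ∈ P, N i ⊆ W) (t : ℕ) :
    ∑ S ∈ W.powersetCard t, #{i ∈ P | S ⊆ N i} = ∑ i ∈ P, (#(N i)).choose t := by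
  refine (sum_card_bipartiteAbove_eq_sum_card_bipartiteBelow
    (r := fun i S => S ⊆ N i)).symm.trans (sum_congr rfl fun i hi => ?_)
  rw [← card_powersetCard]
  congr 1
  ext S
  simp only [bipartiteAbove, mem_filter, mem_powersetCard]
  exact ⟨fun h => ⟨h.2, h.1.2⟩, fun h => ⟨⟨h.1.trans (hN i hi), h.2⟩, h.1⟩⟩

theorem exists_subset_card_eq_many_supersets [DecidableEq α] (P : Finset ι) (W : Finset α)
    (N : ι → Finset α) (hN : ∀ i ∈ P, N i ⊆ W) {t : ℕ} (htW : t ≤ #W) {δ : ℝ} (hδ : 0 ≤ δ)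
    (ht : 2 * t ≤ δ * #W) (hsum : δ * #W * #P ≤ ∑ i ∈ P, (#(N i) : ℝ)) :
    ∃ S ⊆ W, #S = t ∧ (δ / 2) ^ t * #P ≤ #{i ∈ P | S ⊆ N i} := by
  have hchoose : (#(W.powersetCard t) * t.factorial : ℝ) ≤ #W ^ t := by
    rw [card_powersetCard, mul_comm]
    exact_mod_cast (Nat.descFactorial_eq_factorial_mul_choose _ _).symm.trans_le
      (Nat.descFactorial_le_pow _ _)
  have hcount : (∑ S ∈ W.powersetCard t, #{i ∈ P | S ⊆ N i}) * t.factorial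
      = ∑ i ∈ P, (#(N i)).descFactorial t := by
    simp_rw [sum_card_filter_subset_eq_sum_choose P W N hN, sum_mul,
      Nat.descFactorial_eq_factorial_mul_choose, mul_comm]
  have key : ∑ S ∈ W.powersetCard t, (δ / 2) ^ t * (#P : ℝ)
      ≤ ∑ S ∈ W.powersetCard t, (#{i ∈ P | S ⊆ N i} : ℝ) := by
    rw [sum_const, nsmul_eq_mul,
      ← mul_le_mul_iff_of_pos_right (by positivity : (0 : ℝ) < t.factorial), sum_mul]
    calc #(W.powersetCard t) * ((δ / 2) ^ t * #P) * t.factorial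
        ≤ #W ^ t * ((δ / 2) ^ t * #P) := by
          rw [mul_right_comm]; gcongr
      _ = (δ * #W / 2) ^ t * #P := by ring
      _ ≤ ∑ i ∈ P, ((#(N i)).descFactorial t : ℝ) :=
          pow_mul_card_le_sum_descFactorial P _ ht hsum
      _ = _ := by rw [← sum_mul]; exact_mod_cast hcount.symm
  obtain ⟨S, hS, hSN⟩ := exists_le_of_sum_le (powersetCard_nonempty.2 htW) key
  exact ⟨S, (mem_powersetCard.1 hS).1, (mem_powersetCard.1 hS).2, hSN⟩

theorem card_eq_sum_card_filter_cons_mem [DecidableEq α] {k : ℕ} (V : Fin (k + 1) → Finset α)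
    {A : Finset (Fin (k + 1) → α)} (hA : A ⊆ Fintype.piFinset V) :
    #A = ∑ e ∈ Fintype.piFinset (Fin.tail V), #{v ∈ V 0 | Fin.cons v e ∈ A} := by
  rw [card_eq_sum_card_fiberwise fun a ha => (Fin.mem_piFinset_iff_zero_tail.1 (hA ha)).2]
  refine sum_congr rfl fun e _ => card_nbij' (· 0) (Fin.cons · e) ?_ ?_ ?_ (fun v _ => rfl)
  · intro a ha
    obtain ⟨haA, rfl⟩ := mem_filter.1 ha
    exact mem_filter.2
      ⟨(Fin.mem_piFinset_iff_zero_tail.1 (hA haA)).1, by rwa [Fin.cons_self_tail]⟩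
  · intro v hv
    exact mem_filter.2 ⟨(mem_filter.1 hv).2, Fin.tail_cons _ _⟩
  · intro a ha
    obtain ⟨-, rfl⟩ := mem_filter.1 ha
    exact Fin.cons_self_tail a

theorem piFinset_cons_subset {k : ℕ} {S : Finset α} {U : Fin k → Finset α}
    {A : Finset (Fin (k + 1) → α)} (h : ∀ e ∈ Fintype.piFinset U, ∀ v ∈ S, Fin.cons v e ∈ A) :
    Fintype.piFinset (Fin.cons S U : Fin (k + 1) → Finset α) ⊆ A := by
  intro e he
  rw [Fin.mem_piFinset_iff_zero_tail, Fin.cons_zero, Fin.tail_cons] at he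
  simpa using h _ he.2 _ he.1

noncomputable def nextDensity (t : ℕ) (δ : ℝ) : ℝ := (δ / 2) ^ t

theorem pow_le_iterate_nextDensity {t : ℕ} (ht : 1 ≤ t) {δ : ℝ} (hδ : 0 ≤ δ) :
    ∀ j : ℕ, (δ / 4 ^ j) ^ (t ^ j) ≤ (nextDensity t)^[j] δ
  | 0 => by simp
  | j + 1 => by
    have h4 : (2 : ℝ) ≤ 4 ^ t ^ j :=
      (by norm_num : (2 : ℝ) ≤ 4).trans (le_self_pow₀ (by norm_num) (Nat.pow_pos ht).ne')
    rw [Function.iterate_succ_apply', nextDensity]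
    calc (δ / 4 ^ (j + 1)) ^ t ^ (j + 1) = ((δ / 4 ^ j) ^ t ^ j / 4 ^ t ^ j) ^ t := by
          rw [pow_succ t, pow_mul, pow_succ (4 : ℝ), ← div_div, div_pow]
      _ ≤ ((δ / 4 ^ j) ^ t ^ j / 2) ^ t := by gcongr
      _ ≤ ((nextDensity t)^[j] δ / 2) ^ t := by gcongr; exact pow_le_iterate_nextDensity ht hδ j

theorem div_four_pow_le_one {δ : ℝ} (hδ : δ ≤ 1) (m : ℕ) : δ / 4 ^ m ≤ 1 :=
  div_le_one_of_le₀ (hδ.trans (one_le_pow₀ (by norm_num))) (by positivity)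

theorem div_four_pow_pow_le_of_le {t : ℕ} (ht : 1 ≤ t) {δ : ℝ} (hδ₀ : 0 ≤ δ) (hδ₁ : δ ≤ 1)
    {j m : ℕ} (hjm : j ≤ m) : (δ / 4 ^ m) ^ (t ^ m) ≤ (δ / 4 ^ j) ^ (t ^ j) :=
  calc (δ / 4 ^ m) ^ (t ^ m) ≤ (δ / 4 ^ j) ^ (t ^ m) := by
        gcongr
        norm_num
    _ ≤ (δ / 4 ^ j) ^ (t ^ j) :=
        pow_le_pow_of_le_one (by positivity) (div_four_pow_le_one hδ₁ j)
          (Nat.pow_le_pow_right ht hjm)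

theorem two_mul_le_iterate_nextDensity_mul {k t n : ℕ} {δ : ℝ} (hδ : δ ∈ Set.Ioc 0 1)
    (hcond : 2 * t ≤ (δ / 4 ^ (k - 1)) ^ (t ^ (k - 1)) * (n : ℝ)) {j : ℕ} (hj : j < k) :
    2 * t ≤ (nextDensity t)^[j] δ * n := by
  rcases Nat.eq_zero_or_pos t with rfl | ht
  · have : Set.MapsTo (nextDensity 0) (Set.Ici 0) (Set.Ici 0) := fun _ _ => by
      simp [nextDensity]
    simpa using mul_nonneg (this.iterate j hδ.1.le) n.cast_nonneg
  calc (2 * t : ℝ) ≤ (δ / 4 ^ (k - 1)) ^ (t ^ (k - 1)) * n := hcond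
    _ ≤ (δ / 4 ^ j) ^ (t ^ j) * n := by
        gcongr; exact div_four_pow_pow_le_of_le ht hδ.1.le hδ.2 (by omega)
    _ ≤ (nextDensity t)^[j] δ * n := by
        gcongr; exact pow_le_iterate_nextDensity ht hδ.1.le j

theorem exists_piFinset_subset_of_le_card [DecidableEq α] {k t n : ℕ} (htn : t ≤ n)
    (V : Fin k → Finset α) (hV : ∀ i, #(V i) = n) {δ : ℝ} (hδ : 0 < δ)
    (hδn : ∀ j < k, 2 * t ≤ (nextDensity t)^[j] δ * n)
    (A : Finset (Fin k → α)) (hA : A ⊆ Fintype.piFinset V) (hAcard : δ * n ^ k ≤ #A) :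
    ∃ U : Fin k → Finset α, (∀ i, U i ⊆ V i) ∧ (∀ i, #(U i) = t) ∧ Fintype.piFinset U ⊆ A := by
  induction k generalizing δ with
  | zero =>
    obtain ⟨e, he⟩ : A.Nonempty := card_pos.1 (by
      have : (0 : ℝ) < #A := hδ.trans_le (by simpa using hAcard)
      exact_mod_cast this)
    exact ⟨Fin.elim0, fun i => i.elim0, fun i => i.elim0, fun e' _ => Subsingleton.elim e' e ▸ he⟩
  | succ k ih =>
    set P := Fintype.piFinset (Fin.tail V)
    set N : (Fin k → α) → Finset α := fun e => {v ∈ V 0 | Fin.cons v e ∈ A}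
    have hP : #P = n ^ k := by simp [P, Fin.tail, hV]
    have hsum : δ * #(V 0) * #P ≤ ∑ e ∈ P, (#(N e) : ℝ) := by
      rw [hP, hV, Nat.cast_pow, mul_assoc, ← pow_succ']
      exact hAcard.trans_eq (by exact_mod_cast card_eq_sum_card_filter_cons_mem V hA)
    obtain ⟨S, hSV, hSt, hB⟩ := exists_subset_card_eq_many_supersets (t := t) P (V 0) N
      (fun _ _ => filter_subset _ _) (by rwa [hV]) hδ.le (by simpa [hV] using hδn 0 k.succ_pos)
      hsum
    obtain ⟨U, hUV, hUt, hUB⟩ := ih (Fin.tail V) (fun i => hV _) (δ := nextDensity t δ)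
      (by unfold nextDensity; positivity)
      (fun j hj => by simpa only [Function.iterate_succ_apply] using hδn (j + 1) (by omega))
      {e ∈ P | S ⊆ N e} (filter_subset _ _) (by rwa [hP, Nat.cast_pow] at hB)
    refine ⟨Fin.cons S U, Fin.cases hSV hUV, Fin.cases hSt hUt, piFinset_cons_subset ?_⟩
    intro e he v hv
    exact (mem_filter.1 ((mem_filter.1 (hUB he)).2 hv)).2

end

theorem monochromatic_copy_from_popular_colour_general (k : ℕ)
    (δ : ℝ) (hδ : δ ∈ Set.Ioc (0 : ℝ) 1)
    (t n : ℕ)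
    (hcond : (δ / 4 ^ (k - 1)) ^ (t ^ (k - 1)) * (n : ℝ) ≥ 2 * (t : ℝ))
    (V : Fin k → Finset ℕ) (hV : ∀ i, (V i).card = n)
    (φ : (Fin k → ℕ) → ℕ) (c : ℕ)
    (hc : δ * (n : ℝ) ^ k ≤
      (((Fintype.piFinset V).filter fun e => φ e = c).card : ℝ)) :
    ∃ U : Fin k → Finset ℕ, (∀ i, U i ⊆ V i) ∧ (∀ i, (U i).card = t) ∧
      ∀ e ∈ Fintype.piFinset U, ∀ e' ∈ Fintype.piFinset U, φ e = φ e' := by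
  have htn : t ≤ n := by
    have hle : (δ / 4 ^ (k - 1)) ^ (t ^ (k - 1)) ≤ 1 :=
      pow_le_one₀ (by have := hδ.1; positivity) (div_four_pow_le_one hδ.2 _)
    have htn' : (t : ℝ) ≤ n := by
      nlinarith [Nat.cast_nonneg (α := ℝ) n, Nat.cast_nonneg (α := ℝ) t]
    exact_mod_cast htn'
  obtain ⟨U, hUV, hUt, hUA⟩ := exists_piFinset_subset_of_le_card htn V hV hδ.1
    (fun j hj => two_mul_le_iterate_nextDensity_mul hδ hcond hj) _ (filter_subset _ _) hc
  exact ⟨U, hUV, hUt, fun e he e' he' =>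
    (mem_filter.1 (hUA he)).2.trans (mem_filter.1 (hUA he')).2.symm⟩

/-- **Monochromatic copies from popular colours.**
Let `k ≥ 1`, `δ ∈ (0,1]`, and `t, n ≥ 1` with `(δ/4^(k-1))^(t^(k-1)) · n ≥ 2t`.
If `φ` is a colouring of the complete `k`-partite `k`-uniform hypergraph with all
classes `V i` of size `n` in which some colour `c` appears on at least `δ n^k` edges,
then there is a monochromatic copy of `K^(k)_{t,…,t}`: sets `U i ⊆ V i` of size `t`
such that `φ` is constant on the edges spanned by `U 1, …, U k`.
Edges are encoded as transversals `e : Fin k → ℕ` with `e i ∈ V i`. -/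
theorem monochromatic_copy_from_popular_colour (k : ℕ) (hk : 1 ≤ k)
    (δ : ℝ) (hδ : δ ∈ Set.Ioc (0 : ℝ) 1)
    (t n : ℕ) (ht : 1 ≤ t) (hn : 1 ≤ n)
    (hcond : (δ / 4 ^ (k - 1)) ^ (t ^ (k - 1)) * (n : ℝ) ≥ 2 * (t : ℝ))
    (V : Fin k → Finset ℕ) (hV : ∀ i, (V i).card = n)
    (φ : (Fin k → ℕ) → ℕ) (c : ℕ)
    (hc : δ * (n : ℝ) ^ k ≤
      (((Fintype.piFinset V).filter fun e => φ e = c).card : ℝ)) :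
    ∃ U : Fin k → Finset ℕ, (∀ i, U i ⊆ V i) ∧ (∀ i, (U i).card = t) ∧
      ∀ e ∈ Fintype.piFinset U, ∀ e' ∈ Fintype.piFinset U, φ e = φ e' :=
  monochromatic_copy_from_popular_colour_general k δ hδ t n hcond V hV φ c hc
end
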